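/- Conjugation of elementary symplectic generators by δ_I: for I ∈ 𝕄^{(n)}, c ∈ C, and admissible indices i ≠ j, one has δ_I se_{ij}(c) δ_I^{-1} = se_{ij}(t·c) if i ∈ I and σ(j) ∈ I; δ_I se_{ij}(c) δ_I^{-1} = se_{ij}(t^{-1}·c) if σ(i) ∈ I and j ∈ I; and δ_I se_{ij}(c) δ_I^{-1} = se_{ij}(c) otherwise. -/

import Mathlib

namespace SympMonoid

/-- The permutation σ = (1,2)(3,4)⋯(2n-1,2n), in 0-based indexing on `Fin (2*n)`. -/
def sgm (n : ℕ) (i : Fin (2 * n)) : Fin (2 * n) :=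
  if _h : i.val % 2 = 0 then ⟨i.val + 1, by have := i.isLt; omega⟩
  else ⟨i.val - 1, by have := i.isLt; omega⟩

/-- The standard alternating form matrix ψₙ = diag(ψ₁,…,ψ₁) with ψ₁ = [[0,1],[-1,0]]. -/
def Psi (R : Type*) [CommRing R] (n : ℕ) : Matrix (Fin (2 * n)) (Fin (2 * n)) R :=
  Matrix.of fun i j =>
    if i.val % 2 = 0 ∧ j.val = i.val + 1 then (1 : R)
    else if i.val % 2 = 1 ∧ j.val + 1 = i.val then (-1 : R) else 0

/-- The elementary symplectic matrix se_{ij}(λ) = Id + λ e_{ij} − (−1)^{i+j} λ e_{σ(j)σ(i)}. -/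
def se (R : Type*) [CommRing R] (n : ℕ) (i j : Fin (2 * n)) (lam : R) :
    Matrix (Fin (2 * n)) (Fin (2 * n)) R :=
  1 + Matrix.single i j lam
    - Matrix.single (sgm n j) (sgm n i) ((-1 : R) ^ (i.val + j.val) * lam)

end SympMonoid

open SympMonoid Matrix

/-!
Conjugation by a diagonal matrix `diagonal f` with inverse `diagonal g` multiplies the `(a, b)`
entry by `f a * g b` and fixes the identity. So `δ_I` rescales the two off-diagonal entries of
`se_{ij}(c)` by `t^([i ∈ I] - [j ∈ I])` and `t^([σj ∈ I] - [σi ∈ I])`, and these factors agree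
because `I` contains exactly one element of each pair `{k, σ k}`.
-/

theorem Matrix.diagonal_mul_single_mul_diagonal {ι R : Type*} [Fintype ι] [DecidableEq ι]
    [CommSemiring R] (f g : ι → R) (i j : ι) (c : R) :
    diagonal f * single i j c * diagonal g = single i j (f i * g j * c) := by
  ext a b
  rw [mul_diagonal, diagonal_mul, single_apply, single_apply]
  split_ifs with h
  · rw [h.1, h.2]; ring
  · simp

theorem Matrix.diagonal_ite_mul_diagonal_ite_inv {ι R : Type*} [Fintype ι] [DecidableEq ι]
    [CommRing R] (I : Finset ι) (u : Rˣ) :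
    (diagonal fun k => if k ∈ I then (u : R) else 1) *
      (diagonal fun k => if k ∈ I then ((u⁻¹ : Rˣ) : R) else 1) = 1 := by
  rw [diagonal_mul_diagonal, ← diagonal_one]
  congr 1; funext k; split_ifs <;> simp

namespace SympMonoid

theorem val_sgm (n : ℕ) (i : Fin (2 * n)) :
    (sgm n i).val = if i.val % 2 = 0 then i.val + 1 else i.val - 1 := by
  unfold sgm; split_ifs <;> rfl

theorem sgm_sgm (n : ℕ) (i : Fin (2 * n)) : sgm n (sgm n i) = i := by
  apply Fin.ext
  rw [val_sgm, val_sgm]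
  split_ifs <;> omega

variable {R : Type*} [CommRing R] {n : ℕ}

theorem diagonal_mul_se_mul_diagonal {f g : Fin (2 * n) → R} (hfg : diagonal f * diagonal g = 1)
    (i j : Fin (2 * n)) (c : R) (hσ : f (sgm n j) * g (sgm n i) = f i * g j) :
    diagonal f * se R n i j c * diagonal g = se R n i j (f i * g j * c) := by
  simp only [se, mul_add, mul_sub, add_mul, sub_mul, mul_one, hfg,
    diagonal_mul_single_mul_diagonal, hσ]
  ring_nf

theorem sgm_mem_iff {I : Finset (Fin (2 * n))} (hI : ∀ i, i ∈ I ↔ sgm n i ∉ I)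
    (k : Fin (2 * n)) : sgm n k ∈ I ↔ k ∉ I := by
  rw [hI, sgm_sgm]

theorem ite_sgm_mul_ite_sgm {I : Finset (Fin (2 * n))} (hI : ∀ i, i ∈ I ↔ sgm n i ∉ I)
    (u : Rˣ) (i j : Fin (2 * n)) :
    (if sgm n j ∈ I then (u : R) else 1) * (if sgm n i ∈ I then ((u⁻¹ : Rˣ) : R) else 1) =
      (if i ∈ I then (u : R) else 1) * (if j ∈ I then ((u⁻¹ : Rˣ) : R) else 1) := by
  simp only [sgm_mem_iff hI]
  split_ifs <;> simp

end SympMonoid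

theorem delta_conj_se_general (C : Type*) [CommRing C] (n : ℕ) (u : Cˣ) (c : C)
    (I : Finset (Fin (2 * n))) (hI : ∀ i, i ∈ I ↔ sgm n i ∉ I)
    (i j : Fin (2 * n)) :
    (i ∈ I → sgm n j ∈ I →
      (Matrix.diagonal fun k => if k ∈ I then (u : C) else 1) * se C n i j c *
        (Matrix.diagonal fun k => if k ∈ I then (u : C) else 1)⁻¹ =
          se C n i j ((u : C) * c)) ∧
    (sgm n i ∈ I → j ∈ I →
      (Matrix.diagonal fun k => if k ∈ I then (u : C) else 1) * se C n i j c *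
        (Matrix.diagonal fun k => if k ∈ I then (u : C) else 1)⁻¹ =
          se C n i j (((u⁻¹ : Cˣ) : C) * c)) ∧
    (¬(i ∈ I ∧ sgm n j ∈ I) → ¬(sgm n i ∈ I ∧ j ∈ I) →
      (Matrix.diagonal fun k => if k ∈ I then (u : C) else 1) * se C n i j c *
        (Matrix.diagonal fun k => if k ∈ I then (u : C) else 1)⁻¹ = se C n i j c) := by
  have hδ := diagonal_ite_mul_diagonal_ite_inv I u
  rw [inv_eq_right_inv hδ, diagonal_mul_se_mul_diagonal hδ i j c (ite_sgm_mul_ite_sgm hI u i j)]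
  simp only [sgm_mem_iff hI]
  refine ⟨fun hi hj => by simp [hi, hj], fun hi hj => by simp [hi, hj], fun h₁ h₂ => ?_⟩
  have hiff : i ∈ I ↔ j ∈ I := by tauto
  by_cases hi : i ∈ I <;> simp [hi, ← hiff]

/-- Conjugation of the elementary symplectic generators by δ_I. -/
theorem delta_conj_se (C : Type*) [CommRing C] (n : ℕ) (u : Cˣ) (c : C)
    (I : Finset (Fin (2 * n))) (hI : ∀ i, i ∈ I ↔ sgm n i ∉ I)
    (i j : Fin (2 * n)) (hij : i ≠ j) (hadm : sgm n i ≠ j) :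
    (i ∈ I → sgm n j ∈ I →
      (Matrix.diagonal fun k => if k ∈ I then (u : C) else 1) * se C n i j c *
        (Matrix.diagonal fun k => if k ∈ I then (u : C) else 1)⁻¹ =
          se C n i j ((u : C) * c)) ∧
    (sgm n i ∈ I → j ∈ I →
      (Matrix.diagonal fun k => if k ∈ I then (u : C) else 1) * se C n i j c *
        (Matrix.diagonal fun k => if k ∈ I then (u : C) else 1)⁻¹ =
          se C n i j (((u⁻¹ : Cˣ) : C) * c)) ∧
    (¬(i ∈ I ∧ sgm n j ∈ I) → ¬(sgm n i ∈ I ∧ j ∈ I) →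
      (Matrix.diagonal fun k => if k ∈ I then (u : C) else 1) * se C n i j c *
        (Matrix.diagonal fun k => if k ∈ I then (u : C) else 1)⁻¹ = se C n i j c) :=
  delta_conj_se_general C n u c I hI i j
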